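/- Let G be a discrete group and let μ be an irreducible probability measure on G. Then there exists k ∈ ℕ, k ≥ 1, such that the total variation norms ‖μ^{⋆(n+k)} − μ^{⋆n}‖₁ = Σ_{g∈G} |μ^{⋆(n+k)}({g}) − μ^{⋆n}({g})| converge to 0 as n → ∞. -/

import Mathlib

/-!
Choose `k` with `μ^{⋆k}(1) > 0` and write `ν = μ^{⋆k} = (1 - q) δ₁ + q ρ` with `ρ` a probability
measure and `0 < q < 1`. Then `ν^{⋆m} = ∑ⱼ B(m, j) ρ^{⋆j}` with binomial weights
`B(m, j) = C(m, j) qʲ (1 - q)^(m - j)`, so for `n = k m + r` the difference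
`μ^{⋆(n+k)} - μ^{⋆n}` is a combination of the probability measures `ρ^{⋆j} ⋆ μ^{⋆r}` with
coefficients `B(m + 1, j) - B(m, j)`. By Pascal's rule and unimodality of `B(m, ·)`,
`∑ⱼ |B(m + 1, j) - B(m, j)| = 2 q maxⱼ B(m, j)`, and the largest binomial weight is `O(1 / √m)`.
-/

open Filter Topology
open scoped Classical

variable {G : Type*}

/-- Convolution of two summable "measures" (functions) on a discrete group:
`(ν ⋆ μ)(g) = ∑_{a·b=g} ν(a) μ(b)`. -/
noncomputable def mconv [Group G] (ν μ : G → ℝ) : G → ℝ :=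
  fun g => ∑' a : G, ν a * μ (a⁻¹ * g)

/-- The `n`-th convolution power of `μ`, with `convPow μ 0 = δ_e` and `convPow μ 1 = μ`. -/
noncomputable def convPow [Group G] (μ : G → ℝ) : ℕ → G → ℝ
  | 0 => fun g => if g = 1 then 1 else 0
  | n + 1 => mconv (convPow μ n) μ

/-- `μ` is a probability measure on the discrete group `G`. -/
def IsProbMeas [Group G] (μ : G → ℝ) : Prop :=
  (∀ g, 0 ≤ μ g) ∧ HasSum μ 1

/-- `μ` is irreducible: every point is charged by some convolution power `μ^{⋆n}`, `n ≥ 1`. -/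
def MeasIrreducible [Group G] (μ : G → ℝ) : Prop :=
  ∀ g : G, ∃ n : ℕ, 1 ≤ n ∧ 0 < convPow μ n g

/-- The convolution action of a measure `μ` on a function `f ∈ c₀(G)`:
`(f ⋆ μ)(g) = ∑_h f(g·h) μ(h)`. -/
noncomputable def actConv [Group G] (f : G → ℂ) (μ : G → ℝ) : G → ℂ :=
  fun g => ∑' h : G, f (g * h) * (μ h : ℂ)

/-- A function on a discrete space vanishes at infinity iff it tends to `0`
along the cofinite filter. -/
def ZeroAtInfty (f : G → ℂ) : Prop := Tendsto f cofinite (𝓝 0)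

open Finset

noncomputable def diracOne [One G] : G → ℝ := fun g => if g = 1 then 1 else 0

section Convolution

variable [Group G]

namespace IsProbMeas

variable {μ : G → ℝ}

lemma nonneg (hμ : IsProbMeas μ) (g : G) : 0 ≤ μ g := hμ.1 g

lemma summable (hμ : IsProbMeas μ) : Summable μ := hμ.2.summable

lemma tsum_eq_one (hμ : IsProbMeas μ) : ∑' g, μ g = 1 := hμ.2.tsum_eq

lemma le_one (hμ : IsProbMeas μ) (g : G) : μ g ≤ 1 := le_hasSum hμ.2 g fun h _ => hμ.1 h

lemma abs_le_one (hμ : IsProbMeas μ) (g : G) : |μ g| ≤ 1 :=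
  abs_le.2 ⟨by linarith [hμ.nonneg g], hμ.le_one g⟩

end IsProbMeas

lemma summable_mul_of_abs_le_one {ι : Type*} {f φ : ι → ℝ} (hf : Summable f)
    (hφ : ∀ i, |φ i| ≤ 1) : Summable fun i => f i * φ i :=
  Summable.of_norm_bounded hf.abs fun i => by
    rw [Real.norm_eq_abs, abs_mul]
    exact mul_le_of_le_one_right (abs_nonneg _) (hφ i)

/-- `(g, a) ↦ (a, a⁻¹ g)` identifies the summands of `mconv ν μ g` with the product `ν ⊗ μ`. -/
def mconvShear : G × G ≃ G × G :=
  (Equiv.prodComm G G).trans (Equiv.prodShear (Equiv.refl G) fun a => Equiv.mulLeft a⁻¹)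

lemma hasSum_mconv_summand {ν μ : G → ℝ} {s t : ℝ} (hν : HasSum ν s) (hμ : HasSum μ t)
    (hν0 : 0 ≤ ν) (hμ0 : 0 ≤ μ) :
    HasSum (fun p : G × G => ν p.2 * μ (p.2⁻¹ * p.1)) (s * t) :=
  mconvShear.hasSum_iff.2 (hν.mul hμ (hν.summable.mul_of_nonneg hμ.summable hν0 hμ0))

lemma hasSum_mconv {ν μ : G → ℝ} {s t : ℝ} (hν : HasSum ν s) (hμ : HasSum μ t)
    (hν0 : 0 ≤ ν) (hμ0 : 0 ≤ μ) : HasSum (mconv ν μ) (s * t) :=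
  have h := hasSum_mconv_summand hν hμ hν0 hμ0
  h.prod_fiberwise fun g => (h.summable.prod_factor g).hasSum

lemma IsProbMeas.mconv {ν μ : G → ℝ} (hν : IsProbMeas ν) (hμ : IsProbMeas μ) :
    IsProbMeas (mconv ν μ) :=
  ⟨fun g => tsum_nonneg fun a => mul_nonneg (hν.nonneg a) (hμ.nonneg _),
    by simpa using hasSum_mconv hν.2 hμ.2 hν.1 hμ.1⟩

lemma mconv_assoc {ν μ σ : G → ℝ} (hν : IsProbMeas ν) (hμ : IsProbMeas μ) (hσ : IsProbMeas σ) :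
    mconv (mconv ν μ) σ = mconv ν (mconv μ σ) := by
  funext g
  have hF : Summable fun p : G × G => ν p.2 * μ (p.2⁻¹ * p.1) * σ (p.1⁻¹ * g) :=
    summable_mul_of_abs_le_one (hasSum_mconv_summand hν.2 hμ.2 hν.1 hμ.1).summable
      fun p => hσ.abs_le_one _
  have hinner : ∀ a, ∑' b, μ (a⁻¹ * b) * σ (b⁻¹ * g) = mconv μ σ (a⁻¹ * g) := fun a => by
    rw [← (Equiv.mulLeft a).tsum_eq]
    simp [mconv, mul_assoc]
  calc mconv (mconv ν μ) σ g = ∑' b, ∑' a, ν a * μ (a⁻¹ * b) * σ (b⁻¹ * g) := by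
        simp only [mconv, tsum_mul_right]
    _ = ∑' a, ∑' b, ν a * μ (a⁻¹ * b) * σ (b⁻¹ * g) := hF.tsum_comm.symm
    _ = ∑' a, ν a * ∑' b, μ (a⁻¹ * b) * σ (b⁻¹ * g) := by simp only [mul_assoc, tsum_mul_left]
    _ = mconv ν (mconv μ σ) g := by simp only [hinner]; rfl

lemma convPow_zero_eq_diracOne (μ : G → ℝ) : convPow μ 0 = diracOne := rfl

lemma isProbMeas_diracOne : IsProbMeas (diracOne : G → ℝ) :=
  ⟨fun g => by unfold diracOne; split_ifs <;> norm_num, hasSum_ite_eq 1 1⟩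

lemma mconv_diracOne_right (f : G → ℝ) : mconv f diracOne = f := by
  funext g
  rw [mconv, tsum_eq_single g fun a ha => by simp [diracOne, inv_mul_eq_one, ha]]
  simp [diracOne]

lemma IsProbMeas.convPow {μ : G → ℝ} (hμ : IsProbMeas μ) (n : ℕ) : IsProbMeas (convPow μ n) := by
  induction n with
  | zero => exact isProbMeas_diracOne
  | succ n ih => exact ih.mconv hμ

lemma convPow_add {μ : G → ℝ} (hμ : IsProbMeas μ) (a b : ℕ) :
    convPow μ (a + b) = mconv (convPow μ a) (convPow μ b) := by
  induction b with
  | zero => exact (mconv_diracOne_right _).symm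
  | succ b ih =>
    rw [← add_assoc]
    change mconv (convPow μ (a + b)) μ = mconv (convPow μ a) (mconv (convPow μ b) μ)
    rw [ih, mconv_assoc (hμ.convPow a) (hμ.convPow b) hμ]

lemma convPow_convPow {μ : G → ℝ} (hμ : IsProbMeas μ) (k m : ℕ) :
    convPow (convPow μ k) m = convPow μ (k * m) := by
  induction m with
  | zero => rfl
  | succ m ih =>
    change mconv (convPow (convPow μ k) m) (convPow μ k) = _
    rw [ih, Nat.mul_succ, convPow_add hμ]

lemma mconv_sum_left {ι : Type*} (s : Finset ι) (c : ι → ℝ) {φ : ι → G → ℝ}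
    (hφ : ∀ i, Summable (φ i)) {ψ : G → ℝ} (hψ : ∀ g, |ψ g| ≤ 1) :
    mconv (fun g => ∑ i ∈ s, c i * φ i g) ψ = fun g => ∑ i ∈ s, c i * mconv (φ i) ψ g := by
  funext g
  simp only [mconv, sum_mul, mul_assoc]
  rw [Summable.tsum_finsetSum fun i _ =>
    (summable_mul_of_abs_le_one (hφ i) fun a => hψ (a⁻¹ * g)).mul_left (c i)]
  simp only [tsum_mul_left]

lemma mconv_diracOne_add_right {f ρ : G → ℝ} (hf : Summable f) (hρ : ∀ g, |ρ g| ≤ 1)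
    (a b : ℝ) :
    mconv f (fun g => a * diracOne g + b * ρ g) = fun g => a * f g + b * mconv f ρ g := by
  funext g
  have hδ := summable_mul_of_abs_le_one hf fun x => isProbMeas_diracOne.abs_le_one (x⁻¹ * g)
  have hρ' := summable_mul_of_abs_le_one hf fun x => hρ (x⁻¹ * g)
  simp only [mconv, mul_add, mul_left_comm (f _)]
  rw [Summable.tsum_add (hδ.mul_left a) (hρ'.mul_left b), tsum_mul_left, tsum_mul_left]
  congr 2
  exact congrFun (mconv_diracOne_right f) g

lemma tsum_abs_sum_sub_sum_le {ι : Type*} (s : Finset ι) (a b : ι → ℝ) {σ : ι → G → ℝ}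
    (hσ : ∀ i, IsProbMeas (σ i)) :
    ∑' g, |∑ i ∈ s, a i * σ i g - ∑ i ∈ s, b i * σ i g| ≤ ∑ i ∈ s, |a i - b i| := by
  have hpt : ∀ g, |∑ i ∈ s, a i * σ i g - ∑ i ∈ s, b i * σ i g| ≤
      ∑ i ∈ s, |a i - b i| * σ i g := fun g => by
    rw [← sum_sub_distrib]
    refine (abs_sum_le_sum_abs _ _).trans_eq (sum_congr rfl fun i _ => ?_)
    rw [← sub_mul, abs_mul, abs_of_nonneg ((hσ i).nonneg g)]
  have hsum : Summable fun g => ∑ i ∈ s, |a i - b i| * σ i g :=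
    summable_sum fun i _ => (hσ i).summable.mul_left _
  calc _ ≤ ∑' g, ∑ i ∈ s, |a i - b i| * σ i g :=
        (Summable.of_nonneg_of_le (fun g => abs_nonneg _) hpt hsum).tsum_le_tsum hpt hsum
    _ = ∑ i ∈ s, |a i - b i| := by
        rw [Summable.tsum_finsetSum fun i _ => (hσ i).summable.mul_left _]
        simp only [tsum_mul_left, (hσ _).tsum_eq_one, mul_one]

/-- Keeping only half of the mass at `1` in the `δ₁` part makes `q > 0` even when `ν = δ₁`. -/
lemma IsProbMeas.exists_eq_mix_diracOne {ν : G → ℝ} (hν : IsProbMeas ν) (h1 : 0 < ν 1) :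
    ∃ q ρ, 0 < q ∧ q < 1 ∧ IsProbMeas ρ ∧ ∀ g, ν g = (1 - q) * diracOne g + q * ρ g := by
  have hc1 : ν 1 / 2 < 1 := by linarith [hν.le_one 1]
  have hc0 : 0 < 1 - ν 1 / 2 := by linarith
  refine ⟨1 - ν 1 / 2, fun g => (ν g - ν 1 / 2 * diracOne g) / (1 - ν 1 / 2), by linarith,
    by linarith, ⟨fun g => div_nonneg ?_ hc0.le, ?_⟩, fun g => ?_⟩
  · by_cases hg : g = 1
    · simp only [hg, diracOne, if_true]; linarith
    · simp only [diracOne, hg, if_false]; linarith [hν.nonneg g]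
  · have h := (hν.2.sub (isProbMeas_diracOne.2.mul_left (ν 1 / 2))).div_const (1 - ν 1 / 2)
    rwa [mul_one, div_self hc0.ne'] at h
  · rw [mul_div_cancel₀ _ hc0.ne']
    ring

end Convolution

noncomputable def binomWeight (q : ℝ) (m j : ℕ) : ℝ :=
  m.choose j * q ^ j * (1 - q) ^ (m - j)

noncomputable def binomMode (q : ℝ) (m : ℕ) : ℕ := ⌊q * (m + 1)⌋₊

lemma sum_range_abs_sub_of_unimodal {f : ℕ → ℝ} {J N : ℕ} (hJN : J ≤ N)
    (hup : ∀ j < J, f j ≤ f (j + 1)) (hdown : ∀ j, J ≤ j → f (j + 1) ≤ f j) :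
    ∑ j ∈ range N, |f (j + 1) - f j| = 2 * f J - f 0 - f N := by
  rw [← sum_range_add_sum_Ico _ hJN,
    sum_congr rfl fun j hj => abs_of_nonneg (sub_nonneg.2 (hup j (mem_range.1 hj))),
    sum_congr rfl fun j hj => abs_of_nonpos (sub_nonpos.2 (hdown j (mem_Ico.1 hj).1)),
    sum_range_sub, sum_neg_distrib, sum_Ico_sub (f := f) hJN]
  ring

section BinomialWeights

variable {q : ℝ}

lemma binomWeight_nonneg (hq0 : 0 ≤ q) (hq1 : q ≤ 1) (m j : ℕ) : 0 ≤ binomWeight q m j := by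
  have : 0 ≤ 1 - q := by linarith
  unfold binomWeight
  positivity

lemma binomWeight_of_lt {m j : ℕ} (h : m < j) : binomWeight q m j = 0 := by
  simp [binomWeight, Nat.choose_eq_zero_of_lt h]

lemma sum_range_binomWeight (m : ℕ) : ∑ j ∈ range (m + 1), binomWeight q m j = 1 := by
  have h := (add_pow q (1 - q) m).symm
  rw [add_sub_cancel, one_pow] at h
  rw [← h]
  exact sum_congr rfl fun j _ => by unfold binomWeight; ring

lemma sum_binomWeight_le_one (hq0 : 0 ≤ q) (hq1 : q ≤ 1) (m : ℕ) (s : Finset ℕ) :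
    ∑ j ∈ s, binomWeight q m j ≤ 1 := by
  calc ∑ j ∈ s, binomWeight q m j = ∑ j ∈ s ∩ range (m + 1), binomWeight q m j :=
        (sum_subset inter_subset_left fun j hjs hj =>
          binomWeight_of_lt (by simpa [hjs] using hj)).symm
    _ ≤ ∑ j ∈ range (m + 1), binomWeight q m j :=
        sum_le_sum_of_subset_of_nonneg inter_subset_right
          fun j _ _ => binomWeight_nonneg hq0 hq1 m j
    _ = 1 := sum_range_binomWeight m

lemma binomWeight_succ_zero (m : ℕ) : binomWeight q (m + 1) 0 = (1 - q) * binomWeight q m 0 := by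
  simp [binomWeight, pow_succ, mul_comm]

lemma binomWeight_succ_succ (m j : ℕ) :
    binomWeight q (m + 1) (j + 1) = (1 - q) * binomWeight q m (j + 1) + q * binomWeight q m j := by
  unfold binomWeight
  rcases lt_or_ge j m with h | h
  · rw [Nat.choose_succ_succ', Nat.succ_sub_succ, show m - j = m - (j + 1) + 1 by omega]
    push_cast
    ring
  · rcases h.eq_or_lt with rfl | h
    · rw [Nat.choose_self, Nat.choose_self, Nat.choose_succ_self, Nat.sub_self, Nat.sub_self]
      push_cast
      ring
    · simp [Nat.choose_eq_zero_of_lt h, Nat.choose_eq_zero_of_lt (h.trans (lt_add_one j)),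
        Nat.choose_eq_zero_of_lt (Nat.add_lt_add_right h 1)]

lemma sum_range_add_two_binomWeight_mul (m : ℕ) (x : ℕ → ℝ) :
    ∑ j ∈ range (m + 2), binomWeight q m j * x j =
      ∑ j ∈ range (m + 1), binomWeight q m j * x j := by
  rw [sum_range_succ _ (m + 1), binomWeight_of_lt (lt_add_one m), zero_mul, add_zero]

lemma sum_binomWeight_succ_mul (m : ℕ) (x : ℕ → ℝ) :
    ∑ j ∈ range (m + 2), binomWeight q (m + 1) j * x j =
      ∑ j ∈ range (m + 1), binomWeight q m j * ((1 - q) * x j + q * x (j + 1)) := by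
  have hshift := sum_range_succ' (fun j => binomWeight q m j * x j) (m + 1)
  rw [sum_range_add_two_binomWeight_mul] at hshift
  have hL : ∀ j, ((1 - q) * binomWeight q m (j + 1) + q * binomWeight q m j) * x (j + 1) =
      (1 - q) * (binomWeight q m (j + 1) * x (j + 1)) + q * (binomWeight q m j * x (j + 1)) :=
    fun j => by ring
  have hR : ∀ j, binomWeight q m j * ((1 - q) * x j + q * x (j + 1)) =
      (1 - q) * (binomWeight q m j * x j) + q * (binomWeight q m j * x (j + 1)) :=
    fun j => by ring
  rw [sum_range_succ', binomWeight_succ_zero]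
  simp only [binomWeight_succ_succ, hL, hR, sum_add_distrib, ← mul_sum]
  linear_combination (q - 1) * hshift

lemma binomWeight_succ_mul_eq (m j : ℕ) :
    (1 - q) * (j + 1) * binomWeight q m (j + 1) = q * (m - j) * binomWeight q m j := by
  rcases lt_or_ge j m with h | h
  · have hc : ((m.choose (j + 1) * (j + 1) : ℕ) : ℝ) = ((m.choose j * (m - j) : ℕ) : ℝ) := by
      rw [Nat.choose_succ_right_eq]
    push_cast [Nat.cast_sub h.le] at hc
    unfold binomWeight
    rw [show m - j = m - (j + 1) + 1 by omega]
    linear_combination (q ^ (j + 1) * (1 - q) ^ (m - (j + 1)) * (1 - q)) * hc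
  · rw [binomWeight_of_lt (Nat.lt_add_one_of_le h)]
    rcases h.eq_or_lt with rfl | h
    · simp
    · simp [binomWeight_of_lt h]

lemma binomWeight_le_succ (hq0 : 0 ≤ q) (hq1 : q < 1) {m j : ℕ}
    (h : (j : ℝ) + 1 ≤ q * (m + 1)) : binomWeight q m j ≤ binomWeight q m (j + 1) := by
  have hB := binomWeight_nonneg hq0 hq1.le m j
  have hpos : 0 < (1 - q) * (j + 1) := mul_pos (by linarith) (by positivity)
  refine le_of_mul_le_mul_left ?_ hpos
  rw [binomWeight_succ_mul_eq]
  nlinarith [mul_nonneg (sub_nonneg.2 h) hB]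

lemma binomWeight_succ_le (hq0 : 0 ≤ q) (hq1 : q < 1) {m j : ℕ}
    (h : q * (m + 1) ≤ j + 1) : binomWeight q m (j + 1) ≤ binomWeight q m j := by
  have hB := binomWeight_nonneg hq0 hq1.le m j
  have hpos : 0 < (1 - q) * (j + 1) := mul_pos (by linarith) (by positivity)
  refine le_of_mul_le_mul_left ?_ hpos
  rw [binomWeight_succ_mul_eq]
  nlinarith [mul_nonneg (sub_nonneg.2 h) hB]

/-- By Pascal's rule the left side is `q ∑ⱼ |B(m, j + 1) - B(m, j)|`, which telescopes on each
side of the mode. -/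
lemma sum_abs_binomWeight_succ_sub (hq0 : 0 ≤ q) (hq1 : q < 1) (m : ℕ) :
    ∑ j ∈ range (m + 2), |binomWeight q (m + 1) j - binomWeight q m j| =
      2 * q * binomWeight q m (binomMode q m) := by
  have hx : 0 ≤ q * (m + 1) := by positivity
  have hunimodal := sum_range_abs_sub_of_unimodal (f := binomWeight q m) (J := binomMode q m)
    (N := m + 1) (Nat.floor_le_of_le (by push_cast; nlinarith))
    (fun j hj => binomWeight_le_succ hq0 hq1 (by exact_mod_cast (Nat.le_floor_iff hx).1 hj))
    (fun j hj => binomWeight_succ_le hq0 hq1 ((Nat.lt_floor_add_one (q * (m + 1))).le.trans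
      (by exact_mod_cast Nat.add_le_add_right hj 1 : ((binomMode q m : ℕ) : ℝ) + 1 ≤ j + 1)))
  rw [binomWeight_of_lt (lt_add_one m)] at hunimodal
  have hstep : ∀ j, |binomWeight q (m + 1) (j + 1) - binomWeight q m (j + 1)| =
      q * |binomWeight q m (j + 1) - binomWeight q m j| := fun j => by
    rw [binomWeight_succ_succ, show (1 - q) * binomWeight q m (j + 1) + q * binomWeight q m j -
      binomWeight q m (j + 1) = -(q * (binomWeight q m (j + 1) - binomWeight q m j)) by ring,
      abs_neg, abs_mul, abs_of_nonneg hq0]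
  have hzero : |binomWeight q (m + 1) 0 - binomWeight q m 0| = q * binomWeight q m 0 := by
    rw [binomWeight_succ_zero, show (1 - q) * binomWeight q m 0 - binomWeight q m 0 =
      -(q * binomWeight q m 0) by ring, abs_neg,
      abs_of_nonneg (mul_nonneg hq0 (binomWeight_nonneg hq0 hq1.le m 0))]
  rw [sum_range_succ', hzero]
  simp only [hstep, ← mul_sum, hunimodal]
  ring

lemma one_sub_div_mul_binomWeight_mode_add_le (hq0 : 0 < q) (hq1 : q < 1) (m s : ℕ) :
    (1 - (s + 1) / (q * (1 - q) * (m + 1))) * binomWeight q m (binomMode q m + s) ≤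
      binomWeight q m (binomMode q m + s + 1) := by
  set J := binomMode q m
  set D := q * (1 - q) * (m + 1)
  have hq1' : 0 < 1 - q := by linarith
  have hDpos : 0 < D := by positivity
  rcases lt_or_ge m (J + s) with hjm | hjm
  · rw [binomWeight_of_lt hjm, mul_zero]
    exact binomWeight_nonneg hq0.le hq1.le m _
  set u := ((s : ℝ) + 1) / D
  have hu : u * D = s + 1 := div_mul_cancel₀ _ hDpos.ne'
  have hJ : (J : ℝ) ≤ q * (m + 1) := Nat.floor_le (by positivity)
  have hj : ((J + s : ℕ) : ℝ) + 1 ≤ q * (m + 1) + u * D := by push_cast; linarith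
  have hjm' : ((J + s : ℕ) : ℝ) ≤ m := by exact_mod_cast hjm
  have hcoef : (1 - u) * ((1 - q) * ((J + s : ℕ) + 1)) ≤ q * (m - (J + s : ℕ)) := by
    rcases le_or_gt u 1 with hu1 | hu1
    · nlinarith [mul_le_mul_of_nonneg_left hj (mul_nonneg (sub_nonneg.2 hu1) hq1'.le),
        mul_le_mul_of_nonneg_left hj hq0.le, mul_nonneg hDpos.le (mul_nonneg hq1'.le (sq_nonneg u))]
    · nlinarith [mul_nonneg hq0.le (sub_nonneg.2 hjm'),
        mul_pos hq1' (by positivity : (0 : ℝ) < (J + s : ℕ) + 1)]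
  have hB := binomWeight_nonneg hq0.le hq1.le m (J + s)
  have hpos : 0 < (1 - q) * ((J + s : ℕ) + 1) := by positivity
  refine le_of_mul_le_mul_left ?_ hpos
  have hratio := binomWeight_succ_mul_eq (q := q) m (J + s)
  push_cast at hcoef hratio ⊢
  linarith [mul_le_mul_of_nonneg_right hcoef hB]

lemma pow_mul_binomWeight_mode_le (hq0 : 0 < q) (hq1 : q < 1) {m T : ℕ}
    (hT : (T : ℝ) ≤ q * (1 - q) * (m + 1)) {t : ℕ} (ht : t ≤ T) :
    (1 - T / (q * (1 - q) * (m + 1))) ^ t * binomWeight q m (binomMode q m) ≤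
      binomWeight q m (binomMode q m + t) := by
  have hDpos : 0 < q * (1 - q) * (m + 1) := mul_pos (mul_pos hq0 (by linarith)) (by positivity)
  have hc : 0 ≤ 1 - T / (q * (1 - q) * (m + 1)) := sub_nonneg.2 ((div_le_one hDpos).2 hT)
  induction t with
  | zero => simp
  | succ t ih =>
    have hle : ((t : ℝ) + 1) / (q * (1 - q) * (m + 1)) ≤ T / (q * (1 - q) * (m + 1)) :=
      div_le_div_of_nonneg_right (by exact_mod_cast ht) hDpos.le
    calc (1 - T / (q * (1 - q) * (m + 1))) ^ (t + 1) * binomWeight q m (binomMode q m)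
        = (1 - T / (q * (1 - q) * (m + 1))) *
            ((1 - T / (q * (1 - q) * (m + 1))) ^ t * binomWeight q m (binomMode q m)) := by
          ring
      _ ≤ (1 - T / (q * (1 - q) * (m + 1))) * binomWeight q m (binomMode q m + t) :=
          mul_le_mul_of_nonneg_left (ih (by omega)) hc
      _ ≤ (1 - (t + 1) / (q * (1 - q) * (m + 1))) * binomWeight q m (binomMode q m + t) :=
          mul_le_mul_of_nonneg_right (by linarith) (binomWeight_nonneg hq0.le hq1.le m _)
      _ ≤ binomWeight q m (binomMode q m + (t + 1)) :=
          one_sub_div_mul_binomWeight_mode_add_le hq0 hq1 m t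

lemma three_div_four_mul_binomWeight_mode_le (hq0 : 0 < q) (hq1 : q < 1) {m T t : ℕ}
    (hT : (T : ℝ) ^ 2 ≤ q * (1 - q) * (m + 1) / 4) (ht : t ≤ T) :
    3 / 4 * binomWeight q m (binomMode q m) ≤ binomWeight q m (binomMode q m + t) := by
  set D := q * (1 - q) * (m + 1)
  have hDpos : 0 < D := mul_pos (mul_pos hq0 (by linarith)) (by positivity)
  have hTD : (T : ℝ) ≤ D := by
    have : (T : ℝ) ≤ T ^ 2 := by exact_mod_cast Nat.le_self_pow two_ne_zero T
    linarith
  have htT : (t : ℝ) * T ≤ D / 4 := by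
    nlinarith [(Nat.cast_le (α := ℝ)).2 ht, Nat.cast_nonneg (α := ℝ) T]
  have hbernoulli := one_add_mul_le_pow (a := -(T / D)) (by linarith [(div_le_one hDpos).2 hTD]) t
  have hcoef : 3 / 4 ≤ 1 + t * -(T / D) := by
    rw [mul_neg, ← mul_div_assoc, ← sub_eq_add_neg, le_sub_comm, div_le_iff₀ hDpos]
    linarith
  calc 3 / 4 * binomWeight q m (binomMode q m)
      ≤ (1 + -(T / D)) ^ t * binomWeight q m (binomMode q m) :=
        mul_le_mul_of_nonneg_right (hcoef.trans hbernoulli) (binomWeight_nonneg hq0.le hq1.le m _)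
    _ ≤ binomWeight q m (binomMode q m + t) := by
        simpa only [← sub_eq_add_neg] using pow_mul_binomWeight_mode_le hq0 hq1 hTD ht

/-- With `D = q (1 - q) (m + 1)`, the `⌊√D / 2⌋ + 1` weights starting at the mode are each at least
`3 / 4` of the largest one, and they sum to at most `1`. -/
lemma binomWeight_mode_le (hq0 : 0 < q) (hq1 : q < 1) (m : ℕ) :
    binomWeight q m (binomMode q m) ≤ 3 / √(q * (1 - q) * (m + 1)) := by
  set D := q * (1 - q) * (m + 1)
  set J := binomMode q m
  have hDpos : 0 < D := mul_pos (mul_pos hq0 (by linarith)) (by positivity)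
  have hsq := Real.sq_sqrt hDpos.le
  have hB := binomWeight_nonneg hq0.le hq1.le m J
  set T := ⌊√D / 2⌋₊
  have hT : (T : ℝ) ≤ √D / 2 := Nat.floor_le (by positivity)
  have hT1 : √D / 2 < T + 1 := Nat.lt_floor_add_one _
  have hTsq : (T : ℝ) ^ 2 ≤ D / 4 := by nlinarith [Nat.cast_nonneg (α := ℝ) T]
  have hsum : ((T : ℝ) + 1) * (3 / 4 * binomWeight q m J) ≤ 1 :=
    calc ((T : ℝ) + 1) * (3 / 4 * binomWeight q m J)
        ≤ ∑ t ∈ range (T + 1), binomWeight q m (J + t) := by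
          simpa using card_nsmul_le_sum _ _ _ fun t ht =>
            three_div_four_mul_binomWeight_mode_le hq0 hq1 hTsq (Nat.lt_succ_iff.1 (mem_range.1 ht))
      _ ≤ ∑ j ∈ range (J + (T + 1)), binomWeight q m j := by
          rw [sum_range_add (binomWeight q m) J (T + 1)]
          exact le_add_of_nonneg_left (sum_nonneg fun j _ => binomWeight_nonneg hq0.le hq1.le m j)
      _ ≤ 1 := sum_binomWeight_le_one hq0.le hq1.le m _
  rw [le_div_iff₀ (Real.sqrt_pos.2 hDpos)]
  nlinarith [mul_le_mul_of_nonneg_left hT1.le hB]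

lemma tendsto_binomWeight_mode (hq0 : 0 < q) (hq1 : q < 1) :
    Tendsto (fun m : ℕ => binomWeight q m (binomMode q m)) atTop (𝓝 0) := by
  have hD : Tendsto (fun m : ℕ => q * (1 - q) * ((m : ℝ) + 1)) atTop atTop :=
    (tendsto_atTop_add_const_right _ 1 tendsto_natCast_atTop_atTop).const_mul_atTop
      (mul_pos hq0 (by linarith))
  have h := (tendsto_inv_atTop_zero.comp (Real.tendsto_sqrt_atTop.comp hD)).const_mul 3
  rw [mul_zero] at h
  exact squeeze_zero (fun m => binomWeight_nonneg hq0.le hq1.le m _)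
    (fun m => (binomWeight_mode_le hq0 hq1 m).trans_eq (div_eq_mul_inv _ _)) h

lemma tendsto_sum_abs_binomWeight_succ_sub (hq0 : 0 < q) (hq1 : q < 1) :
    Tendsto (fun m : ℕ => ∑ j ∈ range (m + 2), |binomWeight q (m + 1) j - binomWeight q m j|)
      atTop (𝓝 0) := by
  simp_rw [sum_abs_binomWeight_succ_sub hq0.le hq1]
  simpa using (tendsto_binomWeight_mode hq0 hq1).const_mul (2 * q)

end BinomialWeights

section ZeroTwoLaw

variable [Group G] {μ ρ : G → ℝ} {q : ℝ} {k : ℕ}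

lemma convPow_eq_sum_binomWeight {ν : G → ℝ} (hν : IsProbMeas ν) (hρ : IsProbMeas ρ)
    (hmix : ∀ g, ν g = (1 - q) * diracOne g + q * ρ g) (m : ℕ) :
    convPow ν m = fun g => ∑ j ∈ range (m + 1), binomWeight q m j * convPow ρ j g := by
  induction m with
  | zero => funext g; simp [binomWeight, convPow_zero_eq_diracOne]
  | succ m ih =>
    have hstep : ∀ j, mconv (convPow ρ j) ν =
        fun g => (1 - q) * convPow ρ j g + q * convPow ρ (j + 1) g := fun j => by
      rw [funext hmix, mconv_diracOne_add_right (hρ.convPow j).summable hρ.abs_le_one]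
      rfl
    change mconv (convPow ν m) ν = _
    rw [ih, mconv_sum_left _ _ (fun j => (hρ.convPow j).summable) hν.abs_le_one]
    funext g
    simp only [hstep]
    exact (sum_binomWeight_succ_mul m fun j => convPow ρ j g).symm

lemma convPow_mul_add_eq_sum (hμ : IsProbMeas μ) (hρ : IsProbMeas ρ)
    (hmix : ∀ g, convPow μ k g = (1 - q) * diracOne g + q * ρ g) (M r : ℕ) :
    convPow μ (k * M + r) = fun g =>
      ∑ j ∈ range (M + 1), binomWeight q M j * mconv (convPow ρ j) (convPow μ r) g := by
  rw [convPow_add hμ, ← convPow_convPow hμ,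
    convPow_eq_sum_binomWeight (hμ.convPow k) hρ hmix,
    mconv_sum_left _ _ (fun j => (hρ.convPow j).summable) (hμ.convPow r).abs_le_one]

lemma tsum_abs_convPow_add_sub_le (hμ : IsProbMeas μ) (hρ : IsProbMeas ρ)
    (hmix : ∀ g, convPow μ k g = (1 - q) * diracOne g + q * ρ g) (n : ℕ) :
    ∑' g, |convPow μ (n + k) g - convPow μ n g| ≤
      ∑ j ∈ range (n / k + 2), |binomWeight q (n / k + 1) j - binomWeight q (n / k) j| := by
  set m := n / k
  set r := n % k
  have hn : n = k * m + r := (Nat.div_add_mod n k).symm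
  have hnk : n + k = k * (m + 1) + r := by rw [mul_add, mul_one]; omega
  rw [hnk, convPow_mul_add_eq_sum hμ hρ hmix, hn, convPow_mul_add_eq_sum hμ hρ hmix]
  simp only [← sum_range_add_two_binomWeight_mul m]
  exact tsum_abs_sum_sub_sum_le _ _ _ fun j => (hρ.convPow j).mconv (hμ.convPow r)

end ZeroTwoLaw

/-- For an irreducible probability measure `μ` on a discrete group `G`,
there is `k ≥ 1` with `‖μ^{⋆(n+k)} − μ^{⋆n}‖₁ → 0` as `n → ∞`. -/
theorem zero_two_law [Group G] (μ : G → ℝ)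
    (hμ : IsProbMeas μ) (hirr : MeasIrreducible μ) :
    ∃ k : ℕ, 1 ≤ k ∧
      Tendsto (fun n : ℕ => ∑' g : G, |convPow μ (n + k) g - convPow μ n g|) atTop (𝓝 0) := by
  obtain ⟨k, hk, hk1⟩ := hirr 1
  obtain ⟨q, ρ, hq0, hq1, hρ, hmix⟩ := (hμ.convPow k).exists_eq_mix_diracOne hk1
  refine ⟨k, hk, squeeze_zero (fun n => tsum_nonneg fun g => abs_nonneg _)
    (tsum_abs_convPow_add_sub_le hμ hρ hmix) ?_⟩
  exact (tendsto_sum_abs_binomWeight_succ_sub hq0 hq1).comp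
    (Nat.tendsto_div_const_atTop (by omega))
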